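/- arXiv:1411.3798 — 2 statements merged into one kernel-verified Lean document; each statement's English description precedes it below -/
import Mathlib

section
/- In the 4-dimensional Lie algebra L with basis v1, v2, v3, v4 and nonzero brackets [v1,v2] = −v2, [v1,v3] = v3, [v2,v3] = v4, let a1 ≠ 0 and w1 = a1v1 + a2v2 + a3v3 + a4v4, w2 = b1v1 + (a2b1/a1)v2 + (a3b1/a1)v3 + b4v4, and assume w1, w2 are linearly independent; then there exists a Lie algebra automorphism g of L (obtained from φ = exp(ad(ε3 v3))∘exp(ad(ε2 v2)) with ε2 = e^{ε1}a2/a1 for any ε1 and ε3 = −a3/(a1 e^{ε1}), followed by a scaling automorphism) with g(span{w1, w2}) = span{v1, v4}. -/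
private lemma lie_compat {L : Type*} [LieRing L] [LieAlgebra ℝ L]
    (b : Module.Basis (Fin 4) ℝ L) (f : L →ₗ[ℝ] L)
    (h : ∀ i j, ⁅f (b i), f (b j)⁆ = f ⁅b i, b j⁆) (x y : L) :
    ⁅f x, f y⁆ = f ⁅x, y⁆ := by
  have key : (LinearMap.mk₂ ℝ (fun x y : L => ⁅f x, f y⁆)
      (by intros; simp [add_lie]) (by intros; simp [smul_lie])
      (by intros; simp [lie_add]) (by intros; simp [lie_smul]))
    = (LinearMap.mk₂ ℝ (fun x y : L => f ⁅x, y⁆)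
      (by intros; simp [add_lie]) (by intros; simp [smul_lie])
      (by intros; simp [lie_add]) (by intros; simp [lie_smul])) := by
    refine b.ext fun i => b.ext fun j => ?_
    simpa using h i j
  simpa using LinearMap.congr_fun (LinearMap.congr_fun key x) y

private lemma span_pair_eq {M : Type*} [AddCommGroup M] [Module ℝ M]
    (x y : M) (a1 c b1 d : ℝ) (hD : a1 * d - b1 * c ≠ 0) :
    Submodule.span ℝ {a1 • x + c • y, b1 • x + d • y}
      = Submodule.span ℝ {x, y} := by
  apply le_antisymm
  · rw [Submodule.span_le, Set.insert_subset_iff, Set.singleton_subset_iff]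
    exact ⟨Submodule.mem_span_pair.2 ⟨a1, c, rfl⟩,
      Submodule.mem_span_pair.2 ⟨b1, d, rfl⟩⟩
  · rw [Submodule.span_le, Set.insert_subset_iff, Set.singleton_subset_iff]
    constructor
    · refine Submodule.mem_span_pair.2
        ⟨d / (a1 * d - b1 * c), -c / (a1 * d - b1 * c), ?_⟩
      have hD' : d * a1 - b1 * c ≠ 0 := by rwa [mul_comm a1 d] at hD
      match_scalars <;> field_simp <;> ring
    · refine Submodule.mem_span_pair.2
        ⟨-b1 / (a1 * d - b1 * c), a1 / (a1 * d - b1 * c), ?_⟩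
      have hD' : d * a1 - b1 * c ≠ 0 := by rwa [mul_comm a1 d] at hD
      match_scalars <;> field_simp <;> ring

theorem stmt_12 {L : Type*} [LieRing L] [LieAlgebra ℝ L]
    (b : Module.Basis (Fin 4) ℝ L)
    (h12 : ⁅b 0, b 1⁆ = -b 1) (h13 : ⁅b 0, b 2⁆ = b 2)
    (h23 : ⁅b 1, b 2⁆ = b 3)
    (h14 : ⁅b 0, b 3⁆ = 0) (h24 : ⁅b 1, b 3⁆ = 0) (h34 : ⁅b 2, b 3⁆ = 0)
    (a1 a2 a3 a4 b1 b4 : ℝ) (ha1 : a1 ≠ 0)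
    (w1 w2 : L)
    (hw1 : w1 = a1 • b 0 + a2 • b 1 + a3 • b 2 + a4 • b 3)
    (hw2 : w2 = b1 • b 0 + (a2 * b1 / a1) • b 1 + (a3 * b1 / a1) • b 2
      + b4 • b 3)
    (hindep : LinearIndependent ℝ ![w1, w2]) :
    ∃ g : L ≃ₗ⁅ℝ⁆ L,
      Submodule.map (g : L →ₗ[ℝ] L) (Submodule.span ℝ {w1, w2})
        = Submodule.span ℝ {b 0, b 3} := by
  -- reversed brackets
  have h21 : ⁅b 1, b 0⁆ = b 1 := by rw [← lie_skew, h12]; simp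
  have h31 : ⁅b 2, b 0⁆ = -b 2 := by rw [← lie_skew, h13]
  have h32 : ⁅b 2, b 1⁆ = -b 3 := by rw [← lie_skew, h23]
  have h41 : ⁅b 3, b 0⁆ = 0 := by rw [← lie_skew, h14]; simp
  have h42 : ⁅b 3, b 1⁆ = 0 := by rw [← lie_skew, h24]; simp
  have h43 : ⁅b 3, b 2⁆ = 0 := by rw [← lie_skew, h34]; simp
  set t : ℝ := -(a2 / a1) with ht
  set s : ℝ := a3 / a1 with hs
  set f : L →ₗ[ℝ] L := b.constr ℝ
    ![b 0 + t • b 1 + (-s) • b 2 + (-(s*t)) • b 3,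
      b 1 + (-s) • b 3, b 2 + t • b 3, b 3] with hf
  set finv : L →ₗ[ℝ] L := b.constr ℝ
    ![b 0 + (-t) • b 1 + s • b 2 + (-(s*t)) • b 3,
      b 1 + s • b 3, b 2 + (-t) • b 3, b 3] with hfinv
  have hf0 : f (b 0) = b 0 + t • b 1 + (-s) • b 2 + (-(s*t)) • b 3 := by
    rw [hf]; exact b.constr_basis ℝ _ 0
  have hf1 : f (b 1) = b 1 + (-s) • b 3 := by rw [hf]; exact b.constr_basis ℝ _ 1
  have hf2 : f (b 2) = b 2 + t • b 3 := by rw [hf]; exact b.constr_basis ℝ _ 2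
  have hf3 : f (b 3) = b 3 := by rw [hf]; exact b.constr_basis ℝ _ 3
  have hg0 : finv (b 0) = b 0 + (-t) • b 1 + s • b 2 + (-(s*t)) • b 3 := by
    rw [hfinv]; exact b.constr_basis ℝ _ 0
  have hg1 : finv (b 1) = b 1 + s • b 3 := by rw [hfinv]; exact b.constr_basis ℝ _ 1
  have hg2 : finv (b 2) = b 2 + (-t) • b 3 := by rw [hfinv]; exact b.constr_basis ℝ _ 2
  have hg3 : finv (b 3) = b 3 := by rw [hfinv]; exact b.constr_basis ℝ _ 3
  have hcomp1 : f.comp finv = LinearMap.id := by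
    refine b.ext fun i => ?_
    fin_cases i <;>
      simp only [Fin.zero_eta, Fin.mk_one, Fin.reduceFinMk, Fin.isValue,
        LinearMap.comp_apply, LinearMap.id_apply, hg0, hg1, hg2, hg3,
        map_add, map_smul, hf0, hf1, hf2, hf3] <;> module
  have hcomp2 : finv.comp f = LinearMap.id := by
    refine b.ext fun i => ?_
    fin_cases i <;>
      simp only [Fin.zero_eta, Fin.mk_one, Fin.reduceFinMk, Fin.isValue,
        LinearMap.comp_apply, LinearMap.id_apply, hf0, hf1, hf2, hf3,
        map_add, map_smul, hg0, hg1, hg2, hg3] <;> module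
  have hlie : ∀ x y : L, ⁅f x, f y⁆ = f ⁅x, y⁆ := by
    refine lie_compat b f fun i j => ?_
    fin_cases i <;> fin_cases j <;>
      simp only [Fin.zero_eta, Fin.mk_one, Fin.reduceFinMk, Fin.isValue,
        hf0, hf1, hf2, hf3, lie_add, add_lie, lie_smul, smul_lie,
        lie_self, h12, h13, h23, h14, h24, h34, h21, h31, h32, h41, h42, h43,
        map_add, map_smul, map_neg, lie_neg, neg_lie, lie_zero, zero_lie,
        map_zero, smul_neg, smul_zero] <;> module
  let e : L ≃ₗ[ℝ] L := LinearEquiv.ofLinear f finv hcomp1 hcomp2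
  let g : L ≃ₗ⁅ℝ⁆ L :=
    { toLieHom := { toLinearMap := f, map_lie' := fun {x y} => (hlie x y).symm },
      invFun := finv,
      left_inv := fun x => LinearMap.congr_fun hcomp2 x,
      right_inv := fun x => LinearMap.congr_fun hcomp1 x }
  have hfw1 : f w1 = a1 • b 0 + (a4 - a2 * a3 / a1) • b 3 := by
    rw [hw1]
    simp only [map_add, map_smul, hf0, hf1, hf2, hf3]
    match_scalars <;> simp only [ht, hs] <;> field_simp <;> ring
  have hfw2 : f w2 = b1 • b 0 + (b4 - a2 * a3 * b1 / (a1 * a1)) • b 3 := by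
    rw [hw2]
    simp only [map_add, map_smul, hf0, hf1, hf2, hf3]
    match_scalars <;> simp only [ht, hs] <;> field_simp <;> ring
  have hD : a1 * b4 - a4 * b1 ≠ 0 := by
    intro h
    have hz : (-b1) • w1 + a1 • w2 = 0 := by
      rw [hw1, hw2]
      match_scalars
      · ring1
      · field_simp
        ring1
      · field_simp
        ring1
      · linear_combination h
    exact ha1 (LinearIndependent.pair_iff.mp hindep (-b1) a1 hz).2
  refine ⟨g, ?_⟩
  have hmap : Submodule.map (g : L →ₗ[ℝ] L) (Submodule.span ℝ {w1, w2})
      = Submodule.span ℝ {f w1, f w2} := by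
    rw [Submodule.map_span, Set.image_pair]
    rfl
  rw [hmap, hfw1, hfw2]
  apply span_pair_eq
  intro h
  apply hD
  have : a1 * (b4 - a2 * a3 * b1 / (a1 * a1)) - b1 * (a4 - a2 * a3 / a1)
      = a1 * b4 - a4 * b1 := by field_simp; ring
  linarith [this ▸ h]
end

section
/- For constants c1, c2, c3, c4 ∈ ℝ and γ > 0, the function ψ(x,y,t) = c1 + c2(x²+y²) + c3·ln(x²+y²) + c4·(x²+y²)(ln(x²+y²) − 1) + (x²+y²)²/(32γ) + (t/2)(x²+y²), defined for (x,y) ≠ (0,0), satisfies the 2+1 dimensional Navier–Stokes stream-function equation ψ_xxt + ψ_yyt + ψ_x(ψ_xxy + ψ_yyy) − ψ_y(ψ_xxx + ψ_xyy) − γ(ψ_xxxx + 2ψ_xxyy + ψ_yyyy) = 0. -/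
/-!
With `s = x² + y²`, stream functions of the form `ψ = a(s) + t·b(s)` are closed under the planar
Laplacian: `Δψ = (L a)(s) + t·(L b)(s)` with `L g = 4 (g' + s g'')`. The `(x, y)`-gradients of two
such functions are both multiples of `(x, y)`, so the Jacobian `ψ_x (Δψ)_y - ψ_y (Δψ)_x` vanishes.
After commuting mixed partials the equation reads `Δψ_t + J(ψ, Δψ) - γ Δ²ψ = 0`, which becomes the
ODE identity `L b = γ (L (L a) + t L (L b))`. For `b(s) = s / 2` we get `L b = 2` and `L (L b) = 0`,
and for the given profile `a` we get `L (L a) = 2 / γ`.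
-/

/-- Partial derivatives for functions of `(x, y, t) : ℝ × ℝ × ℝ`. -/
noncomputable def Dx (f : ℝ × ℝ × ℝ → ℝ) : ℝ × ℝ × ℝ → ℝ :=
  fun p => fderiv ℝ f p (1, 0, 0)

noncomputable def Dy (f : ℝ × ℝ × ℝ → ℝ) : ℝ × ℝ × ℝ → ℝ :=
  fun p => fderiv ℝ f p (0, 1, 0)

noncomputable def Dt (f : ℝ × ℝ × ℝ → ℝ) : ℝ × ℝ × ℝ → ℝ :=
  fun p => fderiv ℝ f p (0, 0, 1)

open Set Filter Topology Real
open scoped ContDiff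

section DirectionalDeriv

variable {E : Type*} [NormedAddCommGroup E] [NormedSpace ℝ E] {U : Set E} {f g : E → ℝ}

theorem Set.EqOn.fderiv_apply_of_isOpen (h : EqOn f g U) (hU : IsOpen U) (v : E) :
    EqOn (fun x => fderiv ℝ f x v) (fun x => fderiv ℝ g x v) U := fun x hx => by
  dsimp only
  rw [(h.eventuallyEq_of_mem (hU.mem_nhds hx)).fderiv_eq]

theorem ContDiffOn.fderiv_apply_of_isOpen (hf : ContDiffOn ℝ ∞ f U) (hU : IsOpen U) (v : E) :
    ContDiffOn ℝ ∞ (fun x => fderiv ℝ f x v) U :=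
  (hf.fderiv_of_isOpen hU le_rfl).clm_apply contDiffOn_const

theorem fderiv_fderiv_apply_comm {x : E} (hf : ContDiffAt ℝ 2 f x) (v w : E) :
    fderiv ℝ (fun y => fderiv ℝ f y v) x w = fderiv ℝ (fun y => fderiv ℝ f y w) x v := by
  have hd : DifferentiableAt ℝ (fderiv ℝ f) x :=
    (hf.fderiv_right (m := 1) le_rfl).differentiableAt one_ne_zero
  rw [fderiv_clm_apply hd (differentiableAt_const v),
    fderiv_clm_apply hd (differentiableAt_const w)]
  simpa using hf.isSymmSndFDerivAt (by simp) w v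

theorem ContDiffOn.eqOn_fderiv_fderiv_apply_comm (hf : ContDiffOn ℝ ∞ f U) (hU : IsOpen U)
    (v w : E) :
    EqOn (fun x => fderiv ℝ (fun y => fderiv ℝ f y v) x w)
      (fun x => fderiv ℝ (fun y => fderiv ℝ f y w) x v) U := fun x hx =>
  fderiv_fderiv_apply_comm ((hf.contDiffAt (hU.mem_nhds hx)).of_le (by norm_cast)) v w

theorem eqOn_fderiv_add_apply (hf : DifferentiableOn ℝ f U) (hg : DifferentiableOn ℝ g U)
    (hU : IsOpen U) (v : E) :
    EqOn (fun x => fderiv ℝ (fun y => f y + g y) x v)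
      (fun x => fderiv ℝ f x v + fderiv ℝ g x v) U := fun x hx => by
  dsimp only
  rw [fderiv_fun_add (hf.differentiableAt (hU.mem_nhds hx)) (hg.differentiableAt (hU.mem_nhds hx)),
    add_apply]

end DirectionalDeriv

noncomputable def lapXY (f : ℝ × ℝ × ℝ → ℝ) : ℝ × ℝ × ℝ → ℝ :=
  fun p => Dx (Dx f) p + Dy (Dy f) p

section HorizontalLaplacian

variable {U : Set (ℝ × ℝ × ℝ)} {f g : ℝ × ℝ × ℝ → ℝ}

theorem Set.EqOn.Dx_of_isOpen (h : EqOn f g U) (hU : IsOpen U) : EqOn (Dx f) (Dx g) U :=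
  h.fderiv_apply_of_isOpen hU _

theorem Set.EqOn.Dy_of_isOpen (h : EqOn f g U) (hU : IsOpen U) : EqOn (Dy f) (Dy g) U :=
  h.fderiv_apply_of_isOpen hU _

theorem ContDiffOn.Dx_of_isOpen (hf : ContDiffOn ℝ ∞ f U) (hU : IsOpen U) :
    ContDiffOn ℝ ∞ (Dx f) U :=
  hf.fderiv_apply_of_isOpen hU _

theorem ContDiffOn.Dy_of_isOpen (hf : ContDiffOn ℝ ∞ f U) (hU : IsOpen U) :
    ContDiffOn ℝ ∞ (Dy f) U :=
  hf.fderiv_apply_of_isOpen hU _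

theorem ContDiffOn.eqOn_Dx_Dy_comm (hf : ContDiffOn ℝ ∞ f U) (hU : IsOpen U) :
    EqOn (Dx (Dy f)) (Dy (Dx f)) U :=
  hf.eqOn_fderiv_fderiv_apply_comm hU _ _

theorem ContDiffOn.eqOn_Dy_Dy_Dx_Dx_comm (hf : ContDiffOn ℝ ∞ f U) (hU : IsOpen U) :
    EqOn (Dy (Dy (Dx (Dx f)))) (Dx (Dx (Dy (Dy f)))) U :=
  have hx := hf.Dx_of_isOpen hU
  have hy := hf.Dy_of_isOpen hU
  (((hx.eqOn_Dx_Dy_comm hU).symm.Dy_of_isOpen hU).trans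
    ((hx.Dy_of_isOpen hU).eqOn_Dx_Dy_comm hU).symm).trans
    ((((hf.eqOn_Dx_Dy_comm hU).symm.Dy_of_isOpen hU).Dx_of_isOpen hU).trans
      ((hy.eqOn_Dx_Dy_comm hU).symm.Dx_of_isOpen hU))

theorem Set.EqOn.lapXY_of_isOpen (h : EqOn f g U) (hU : IsOpen U) : EqOn (lapXY f) (lapXY g) U :=
  fun _ hq => by
    simp only [lapXY, (h.Dx_of_isOpen hU).Dx_of_isOpen hU hq,
      (h.Dy_of_isOpen hU).Dy_of_isOpen hU hq]

theorem fderiv_lapXY_apply (hf : ContDiffOn ℝ ∞ f U) (hU : IsOpen U) (v : ℝ × ℝ × ℝ) :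
    EqOn (fun p => fderiv ℝ (lapXY f) p v)
      (fun p => fderiv ℝ (Dx (Dx f)) p v + fderiv ℝ (Dy (Dy f)) p v) U :=
  eqOn_fderiv_add_apply (((hf.Dx_of_isOpen hU).Dx_of_isOpen hU).differentiableOn (by simp))
    (((hf.Dy_of_isOpen hU).Dy_of_isOpen hU).differentiableOn (by simp)) hU v

theorem lapXY_fderiv_apply_comm (hf : ContDiffOn ℝ ∞ f U) (hU : IsOpen U) (v : ℝ × ℝ × ℝ) :
    EqOn (lapXY fun p => fderiv ℝ f p v) (fun p => fderiv ℝ (lapXY f) p v) U := by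
  intro q hq
  have hxx : Dx (Dx fun p => fderiv ℝ f p v) q = fderiv ℝ (Dx (Dx f)) q v :=
    ((hf.eqOn_fderiv_fderiv_apply_comm hU v _).fderiv_apply_of_isOpen hU _ hq).trans
      ((hf.fderiv_apply_of_isOpen hU _).eqOn_fderiv_fderiv_apply_comm hU v _ hq)
  have hyy : Dy (Dy fun p => fderiv ℝ f p v) q = fderiv ℝ (Dy (Dy f)) q v :=
    ((hf.eqOn_fderiv_fderiv_apply_comm hU v _).fderiv_apply_of_isOpen hU _ hq).trans
      ((hf.fderiv_apply_of_isOpen hU _).eqOn_fderiv_fderiv_apply_comm hU v _ hq)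
  simp only [lapXY, hxx, hyy, fderiv_lapXY_apply hf hU v hq]

theorem lapXY_lapXY (hf : ContDiffOn ℝ ∞ f U) (hU : IsOpen U) :
    EqOn (lapXY (lapXY f))
      (fun p => Dx (Dx (Dx (Dx f))) p + 2 * Dx (Dx (Dy (Dy f))) p + Dy (Dy (Dy (Dy f))) p) U := by
  intro q hq
  dsimp only
  have hxx' := (hf.Dx_of_isOpen hU).Dx_of_isOpen hU
  have hyy' := (hf.Dy_of_isOpen hU).Dy_of_isOpen hU
  have hxx : Dx (Dx (lapXY f)) q = Dx (Dx (Dx (Dx f))) q + Dx (Dx (Dy (Dy f))) q :=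
    ((fderiv_lapXY_apply hf hU (1, 0, 0)).Dx_of_isOpen hU hq).trans <| eqOn_fderiv_add_apply
      ((hxx'.Dx_of_isOpen hU).differentiableOn (by simp))
      ((hyy'.Dx_of_isOpen hU).differentiableOn (by simp)) hU _ hq
  have hyy : Dy (Dy (lapXY f)) q = Dy (Dy (Dx (Dx f))) q + Dy (Dy (Dy (Dy f))) q :=
    ((fderiv_lapXY_apply hf hU (0, 1, 0)).Dy_of_isOpen hU hq).trans <| eqOn_fderiv_add_apply
      ((hxx'.Dy_of_isOpen hU).differentiableOn (by simp))
      ((hyy'.Dy_of_isOpen hU).differentiableOn (by simp)) hU _ hq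
  rw [lapXY, hxx, hyy, hf.eqOn_Dy_Dy_Dx_Dx_comm hU hq]
  ring

end HorizontalLaplacian

noncomputable def vorticityResidual (γ : ℝ) (ψ : ℝ × ℝ × ℝ → ℝ) (p : ℝ × ℝ × ℝ) : ℝ :=
  Dx (Dx (Dt ψ)) p + Dy (Dy (Dt ψ)) p
    + Dx ψ p * (Dx (Dx (Dy ψ)) p + Dy (Dy (Dy ψ)) p)
    - Dy ψ p * (Dx (Dx (Dx ψ)) p + Dx (Dy (Dy ψ)) p)
    - γ * (Dx (Dx (Dx (Dx ψ))) p + 2 * Dx (Dx (Dy (Dy ψ))) p + Dy (Dy (Dy (Dy ψ))) p)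

theorem vorticityResidual_eq {U : Set (ℝ × ℝ × ℝ)} {ψ : ℝ × ℝ × ℝ → ℝ} (hψ : ContDiffOn ℝ ∞ ψ U)
    (hU : IsOpen U) (γ : ℝ) {p : ℝ × ℝ × ℝ} (hp : p ∈ U) :
    vorticityResidual γ ψ p = lapXY (Dt ψ) p + Dx ψ p * Dy (lapXY ψ) p
      - Dy ψ p * Dx (lapXY ψ) p - γ * lapXY (lapXY ψ) p := by
  have hx : Dx (lapXY ψ) p = Dx (Dx (Dx ψ)) p + Dx (Dy (Dy ψ)) p := fderiv_lapXY_apply hψ hU _ hp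
  have hy : Dy (lapXY ψ) p = Dx (Dx (Dy ψ)) p + Dy (Dy (Dy ψ)) p :=
    (lapXY_fderiv_apply_comm hψ hU _ hp).symm
  rw [vorticityResidual, lapXY_lapXY hψ hU hp, hx, hy]
  rfl

def offAxis : Set (ℝ × ℝ × ℝ) := {q | q.1 ^ 2 + q.2.1 ^ 2 ≠ 0}

theorem isOpen_offAxis : IsOpen offAxis :=
  isOpen_ne_fun (by fun_prop) continuous_const

def radialAffine (a b : ℝ → ℝ) (q : ℝ × ℝ × ℝ) : ℝ :=
  a (q.1 ^ 2 + q.2.1 ^ 2) + q.2.2 * b (q.1 ^ 2 + q.2.1 ^ 2)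

noncomputable def radialLap (g : ℝ → ℝ) (s : ℝ) : ℝ := 4 * (deriv g s + s * deriv (deriv g) s)

theorem ContDiffOn.radialLap {g : ℝ → ℝ} (hg : ContDiffOn ℝ ∞ g {0}ᶜ) :
    ContDiffOn ℝ ∞ (radialLap g) {0}ᶜ := by
  have hg' := hg.deriv_of_isOpen isOpen_compl_singleton (m := ∞) le_rfl
  have hg'' := hg'.deriv_of_isOpen isOpen_compl_singleton (m := ∞) le_rfl
  exact contDiffOn_const.mul (hg'.add (contDiffOn_id.mul hg''))

theorem Set.EqOn.radialLap_of_isOpen {U : Set ℝ} {f g : ℝ → ℝ} (h : EqOn f g U) (hU : IsOpen U) :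
    EqOn (radialLap f) (radialLap g) U := fun s hs => by
  have h' : _root_.deriv f =ᶠ[𝓝 s] _root_.deriv g := by
    filter_upwards [hU.mem_nhds hs] with t ht
    exact (h.eventuallyEq_of_mem (hU.mem_nhds ht)).deriv_eq
  rw [radialLap, radialLap, h'.deriv_eq, h'.eq_of_nhds]

theorem radialLap_eqOn_of_hasDerivAt {U : Set ℝ} {g g' g'' : ℝ → ℝ} (hU : IsOpen U)
    (hg : ∀ s ∈ U, HasDerivAt g (g' s) s) (hg' : ∀ s ∈ U, HasDerivAt g' (g'' s) s) :
    EqOn (radialLap g) (fun s => 4 * (g' s + s * g'' s)) U := fun s hs => by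
  have h : deriv g =ᶠ[𝓝 s] g' := by
    filter_upwards [hU.mem_nhds hs] with t ht
    exact (hg t ht).deriv
  rw [radialLap, h.deriv_eq, h.eq_of_nhds, (hg' s hs).deriv]

section RadialAffine

variable {a b : ℝ → ℝ}

theorem fderiv_radialAffine_apply {q : ℝ × ℝ × ℝ}
    (ha : DifferentiableAt ℝ a (q.1 ^ 2 + q.2.1 ^ 2))
    (hb : DifferentiableAt ℝ b (q.1 ^ 2 + q.2.1 ^ 2)) (v : ℝ × ℝ × ℝ) :
    fderiv ℝ (radialAffine a b) q v =
      2 * (q.1 * v.1 + q.2.1 * v.2.1) * radialAffine (deriv a) (deriv b) q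
        + v.2.2 * b (q.1 ^ 2 + q.2.1 ^ 2) := by
  have hs := ((hasFDerivAt_fst (𝕜 := ℝ) (p := q)).pow 2).add
    ((hasFDerivAt_snd (𝕜 := ℝ) (p := q)).fst.pow 2)
  have H : HasFDerivAt (radialAffine a b) _ q := (ha.hasDerivAt.comp_hasFDerivAt q hs).add
    ((hasFDerivAt_snd (𝕜 := ℝ) (p := q)).snd.mul (hb.hasDerivAt.comp_hasFDerivAt q hs))
  rw [H.fderiv]
  simp only [Nat.add_one_sub_one, pow_one, nsmul_eq_mul, Nat.cast_ofNat, smul_add, add_apply,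
    smul_apply, ContinuousLinearMap.coe_fst', smul_eq_mul, ContinuousLinearMap.comp_apply,
    ContinuousLinearMap.coe_snd', radialAffine]
  ring

theorem differentiableAt_radialAffine {q : ℝ × ℝ × ℝ}
    (ha : DifferentiableAt ℝ a (q.1 ^ 2 + q.2.1 ^ 2))
    (hb : DifferentiableAt ℝ b (q.1 ^ 2 + q.2.1 ^ 2)) :
    DifferentiableAt ℝ (radialAffine a b) q := by
  unfold radialAffine
  fun_prop

theorem contDiffOn_radialAffine {n : WithTop ℕ∞} (ha : ContDiffOn ℝ n a {0}ᶜ)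
    (hb : ContDiffOn ℝ n b {0}ᶜ) : ContDiffOn ℝ n (radialAffine a b) offAxis := by
  have hs : ContDiffOn ℝ n (fun q : ℝ × ℝ × ℝ => q.1 ^ 2 + q.2.1 ^ 2) offAxis := by fun_prop
  exact (ha.comp hs fun _ hq => hq).add
    (contDiffOn_snd.snd.mul (hb.comp hs fun _ hq => hq))

theorem eqOn_fderiv_radialAffine_apply (ha : DifferentiableOn ℝ a {0}ᶜ)
    (hb : DifferentiableOn ℝ b {0}ᶜ) (v : ℝ × ℝ × ℝ) :
    EqOn (fun q => fderiv ℝ (radialAffine a b) q v)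
      (fun q => 2 * (q.1 * v.1 + q.2.1 * v.2.1) * radialAffine (deriv a) (deriv b) q
        + v.2.2 * b (q.1 ^ 2 + q.2.1 ^ 2)) offAxis := fun _ hq =>
  fderiv_radialAffine_apply (ha.differentiableAt (isOpen_compl_singleton.mem_nhds hq))
    (hb.differentiableAt (isOpen_compl_singleton.mem_nhds hq)) v

theorem fderiv_fderiv_radialAffine_apply (ha : ContDiffOn ℝ 2 a {0}ᶜ)
    (hb : ContDiffOn ℝ 2 b {0}ᶜ) {q : ℝ × ℝ × ℝ} (hq : q ∈ offAxis) (v w : ℝ × ℝ × ℝ) :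
    fderiv ℝ (fun p => fderiv ℝ (radialAffine a b) p v) q w =
      2 * (v.1 * w.1 + v.2.1 * w.2.1) * radialAffine (deriv a) (deriv b) q
        + 4 * (q.1 * v.1 + q.2.1 * v.2.1) * (q.1 * w.1 + q.2.1 * w.2.1)
          * radialAffine (deriv (deriv a)) (deriv (deriv b)) q
        + 2 * (w.2.2 * (q.1 * v.1 + q.2.1 * v.2.1) + v.2.2 * (q.1 * w.1 + q.2.1 * w.2.1))
          * deriv b (q.1 ^ 2 + q.2.1 ^ 2) := by
  have hs : q.1 ^ 2 + q.2.1 ^ 2 ∈ ({0}ᶜ : Set ℝ) := hq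
  have hnhds := isOpen_compl_singleton.mem_nhds hs
  have ha' := (ha.deriv_of_isOpen isOpen_compl_singleton (m := 1) le_rfl).differentiableOn
    one_ne_zero
  have hb' := (hb.deriv_of_isOpen isOpen_compl_singleton (m := 1) le_rfl).differentiableOn
    one_ne_zero
  rw [((eqOn_fderiv_radialAffine_apply (ha.differentiableOn two_ne_zero)
    (hb.differentiableOn two_ne_zero) v).eventuallyEq_of_mem
      (isOpen_offAxis.mem_nhds hq)).fderiv_eq]
  have hR' := (differentiableAt_radialAffine (ha'.differentiableAt hnhds)
    (hb'.differentiableAt hnhds)).hasFDerivAt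
  have hsq := ((hasFDerivAt_fst (𝕜 := ℝ) (p := q)).pow 2).add
    ((hasFDerivAt_snd (𝕜 := ℝ) (p := q)).fst.pow 2)
  have hlin := (((hasFDerivAt_fst (𝕜 := ℝ) (p := q)).mul_const v.1).add
    ((hasFDerivAt_snd (𝕜 := ℝ) (p := q)).fst.mul_const v.2.1)).const_mul 2
  have hbs := ((hb.differentiableOn two_ne_zero).differentiableAt hnhds).hasDerivAt.comp_hasFDerivAt
    q hsq
  have H : HasFDerivAt (fun p => 2 * (p.1 * v.1 + p.2.1 * v.2.1)
      * radialAffine (deriv a) (deriv b) p + v.2.2 * b (p.1 ^ 2 + p.2.1 ^ 2)) _ q := (hlin.mul hR').add (hbs.const_mul v.2.2)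
  rw [H.fderiv]
  simp only [Pi.add_apply, smul_add, Nat.add_one_sub_one, pow_one, nsmul_eq_mul, Nat.cast_ofNat,
    add_apply, smul_apply, fderiv_radialAffine_apply (ha'.differentiableAt hnhds)
    (hb'.differentiableAt hnhds), smul_eq_mul, ContinuousLinearMap.coe_fst',
    ContinuousLinearMap.comp_apply, ContinuousLinearMap.coe_snd']
  ring

theorem Dx_radialAffine (ha : DifferentiableOn ℝ a {0}ᶜ)
    (hb : DifferentiableOn ℝ b {0}ᶜ) :
    EqOn (Dx (radialAffine a b)) (fun q => 2 * q.1 * radialAffine (deriv a) (deriv b) q)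
      offAxis := fun _ hq => by
  simpa [Dx] using eqOn_fderiv_radialAffine_apply ha hb (1, 0, 0) hq

theorem Dy_radialAffine (ha : DifferentiableOn ℝ a {0}ᶜ)
    (hb : DifferentiableOn ℝ b {0}ᶜ) :
    EqOn (Dy (radialAffine a b)) (fun q => 2 * q.2.1 * radialAffine (deriv a) (deriv b) q)
      offAxis := fun _ hq => by
  simpa [Dy] using eqOn_fderiv_radialAffine_apply ha hb (0, 1, 0) hq

theorem Dt_radialAffine (ha : DifferentiableOn ℝ a {0}ᶜ)
    (hb : DifferentiableOn ℝ b {0}ᶜ) :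
    EqOn (Dt (radialAffine a b)) (radialAffine b 0) offAxis := fun _ hq => by
  simpa [Dt, radialAffine] using eqOn_fderiv_radialAffine_apply ha hb (0, 0, 1) hq

theorem lapXY_radialAffine (ha : ContDiffOn ℝ 2 a {0}ᶜ)
    (hb : ContDiffOn ℝ 2 b {0}ᶜ) :
    EqOn (lapXY (radialAffine a b)) (radialAffine (radialLap a) (radialLap b)) offAxis := by
  intro q hq
  show fderiv ℝ (fun p => fderiv ℝ (radialAffine a b) p (1, 0, 0)) q (1, 0, 0)
    + fderiv ℝ (fun p => fderiv ℝ (radialAffine a b) p (0, 1, 0)) q (0, 1, 0) = _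
  simp only [fderiv_fderiv_radialAffine_apply ha hb hq, radialAffine, radialLap]
  ring

theorem vorticityResidual_radialAffine (ha : ContDiffOn ℝ ∞ a {0}ᶜ)
    (hb : ContDiffOn ℝ ∞ b {0}ᶜ) (γ : ℝ) {q : ℝ × ℝ × ℝ} (hq : q ∈ offAxis) :
    vorticityResidual γ (radialAffine a b) q = radialLap b (q.1 ^ 2 + q.2.1 ^ 2)
      - γ * radialAffine (radialLap (radialLap a)) (radialLap (radialLap b)) q := by
  have hC2 : ∀ g : ℝ → ℝ, ContDiffOn ℝ ∞ g {0}ᶜ → ContDiffOn ℝ 2 g {0}ᶜ :=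
    fun g hg => hg.of_le (by norm_cast)
  have hC1 : ∀ g : ℝ → ℝ, ContDiffOn ℝ ∞ g {0}ᶜ → DifferentiableOn ℝ g {0}ᶜ :=
    fun g hg => hg.differentiableOn (by simp)
  have hlap := lapXY_radialAffine (hC2 a ha) (hC2 b hb)
  have hrot : lapXY (Dt (radialAffine a b)) q = radialLap b (q.1 ^ 2 + q.2.1 ^ 2) := by
    rw [((Dt_radialAffine (hC1 a ha) (hC1 b hb)).lapXY_of_isOpen isOpen_offAxis hq),
      lapXY_radialAffine (b := 0) (hC2 b hb) contDiffOn_const hq]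
    simp [radialAffine, radialLap]
  have hjac : Dx (radialAffine a b) q * Dy (lapXY (radialAffine a b)) q
      - Dy (radialAffine a b) q * Dx (lapXY (radialAffine a b)) q = 0 := by
    rw [hlap.Dx_of_isOpen isOpen_offAxis hq, hlap.Dy_of_isOpen isOpen_offAxis hq,
      Dx_radialAffine (hC1 a ha) (hC1 b hb) hq, Dy_radialAffine (hC1 a ha) (hC1 b hb) hq,
      Dx_radialAffine (hC1 _ ha.radialLap) (hC1 _ hb.radialLap) hq,
      Dy_radialAffine (hC1 _ ha.radialLap) (hC1 _ hb.radialLap) hq]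
    ring
  have hvisc : lapXY (lapXY (radialAffine a b)) q
      = radialAffine (radialLap (radialLap a)) (radialLap (radialLap b)) q :=
    (hlap.lapXY_of_isOpen isOpen_offAxis hq).trans
      (lapXY_radialAffine (hC2 _ ha.radialLap) (hC2 _ hb.radialLap) hq)
  rw [vorticityResidual_eq (contDiffOn_radialAffine ha hb) isOpen_offAxis γ hq, hrot, hvisc]
  linear_combination hjac

end RadialAffine

noncomputable def streamProfile (c1 c2 c3 c4 γ : ℝ) (s : ℝ) : ℝ :=
  c1 + c2 * s + c3 * log s + c4 * s * (log s - 1) + s ^ 2 / (32 * γ)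

theorem radialLap_radialLap_streamProfile (c1 c2 c3 c4 γ : ℝ) :
    EqOn (radialLap (radialLap (streamProfile c1 c2 c3 c4 γ))) (fun _ => 2 / γ) {0}ᶜ := by
  have hU : IsOpen ({0}ᶜ : Set ℝ) := isOpen_compl_singleton
  have hF' : ∀ s ∈ ({0}ᶜ : Set ℝ), HasDerivAt (streamProfile c1 c2 c3 c4 γ)
      (c2 + c3 * s⁻¹ + c4 * log s + s / (16 * γ)) s := fun s hs => by
    have hs : s ≠ 0 := hs
    refine ((((hasDerivAt_id' s).const_mul c2).const_add c1).add
      ((hasDerivAt_log hs).const_mul c3) |>.add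
      (((hasDerivAt_id' s).const_mul c4).mul ((hasDerivAt_log hs).sub_const 1)) |>.add
      ((hasDerivAt_pow 2 s).div_const (32 * γ))).congr_deriv ?_
    field_simp
    ring
  have hF'' : ∀ s ∈ ({0}ᶜ : Set ℝ), HasDerivAt (fun s => c2 + c3 * s⁻¹ + c4 * log s + s / (16 * γ))
      (-c3 * (s ^ 2)⁻¹ + c4 * s⁻¹ + 1 / (16 * γ)) s := fun s hs => by
    have hs : s ≠ 0 := hs
    refine ((((hasDerivAt_inv hs).const_mul c3).const_add c2).add
      ((hasDerivAt_log hs).const_mul c4) |>.add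
      ((hasDerivAt_id' s).div_const (16 * γ))).congr_deriv ?_
    ring
  have hΦ' : ∀ s ∈ ({0}ᶜ : Set ℝ), HasDerivAt (fun s => 4 * (c2 + c4 + c4 * log s) + s / (2 * γ))
      (4 * c4 * s⁻¹ + 1 / (2 * γ)) s := fun s hs => by
    have hs : s ≠ 0 := hs
    refine ((((hasDerivAt_log hs).const_mul c4).const_add (c2 + c4)).const_mul 4 |>.add
      ((hasDerivAt_id' s).div_const (2 * γ))).congr_deriv ?_
    ring
  have hΦ'' : ∀ s ∈ ({0}ᶜ : Set ℝ), HasDerivAt (fun s => 4 * c4 * s⁻¹ + 1 / (2 * γ))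
      (-4 * c4 * (s ^ 2)⁻¹) s := fun s hs => by
    have hs : s ≠ 0 := hs
    refine (((hasDerivAt_inv hs).const_mul (4 * c4)).add_const (1 / (2 * γ))).congr_deriv ?_
    ring
  have hΦ : EqOn (radialLap (streamProfile c1 c2 c3 c4 γ))
      (fun s => 4 * (c2 + c4 + c4 * log s) + s / (2 * γ)) {0}ᶜ :=
    (radialLap_eqOn_of_hasDerivAt hU hF' hF'').trans fun s hs => by
      have hs : s ≠ 0 := hs
      field_simp
      ring
  refine ((hΦ.radialLap_of_isOpen hU).trans (radialLap_eqOn_of_hasDerivAt hU hΦ' hΦ'')).trans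
    fun s hs => ?_
  have hs : s ≠ 0 := hs
  field_simp
  ring

theorem contDiffOn_streamProfile (c1 c2 c3 c4 γ : ℝ) :
    ContDiffOn ℝ ∞ (streamProfile c1 c2 c3 c4 γ) {0}ᶜ := by
  unfold streamProfile
  fun_prop (disch := simp_all)

theorem stmt_15 (c1 c2 c3 c4 γ : ℝ) (hγ : 0 < γ) :
    let ψ : ℝ × ℝ × ℝ → ℝ := fun p =>
      c1 + c2 * (p.1 ^ 2 + p.2.1 ^ 2)
        + c3 * Real.log (p.1 ^ 2 + p.2.1 ^ 2)
        + c4 * (p.1 ^ 2 + p.2.1 ^ 2) * (Real.log (p.1 ^ 2 + p.2.1 ^ 2) - 1)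
        + (p.1 ^ 2 + p.2.1 ^ 2) ^ 2 / (32 * γ)
        + p.2.2 / 2 * (p.1 ^ 2 + p.2.1 ^ 2)
    ∀ p : ℝ × ℝ × ℝ, (p.1, p.2.1) ≠ (0, 0) →
      Dx (Dx (Dt ψ)) p + Dy (Dy (Dt ψ)) p
        + Dx ψ p * (Dx (Dx (Dy ψ)) p + Dy (Dy (Dy ψ)) p)
        - Dy ψ p * (Dx (Dx (Dx ψ)) p + Dx (Dy (Dy ψ)) p)
        - γ * (Dx (Dx (Dx (Dx ψ))) p + 2 * Dx (Dx (Dy (Dy ψ))) p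
            + Dy (Dy (Dy (Dy ψ))) p) = 0 := by
  intro ψ p hp
  have hp' : p ∈ offAxis := fun h => hp <| by
    simp only [mul_self_add_mul_self_eq_zero.1 (by simpa only [sq] using h)]
  have hψ : ψ = radialAffine (streamProfile c1 c2 c3 c4 γ) (fun s => s / 2) := by
    funext q
    simp only [ψ, radialAffine, streamProfile]
    ring
  have hhalf : radialLap (fun s : ℝ => s / 2) = fun _ => 2 := by
    have hd : deriv (fun s : ℝ => s / 2) = fun _ => 1 / 2 :=
      funext fun s => ((hasDerivAt_id' s).div_const 2).deriv
    funext s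
    simp only [radialLap, hd, deriv_const]
    ring
  show vorticityResidual γ ψ p = 0
  rw [hψ, vorticityResidual_radialAffine (contDiffOn_streamProfile c1 c2 c3 c4 γ) (by fun_prop)
    γ hp', hhalf, radialAffine, radialLap_radialLap_streamProfile c1 c2 c3 c4 γ hp']
  simp only [radialLap, deriv_const', mul_zero, add_zero]
  field_simp [hγ.ne']
  ring
end
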